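/- arXiv:0711.1291 — 4 statements merged into one kernel-verified Lean document; each statement's English description precedes it below -/
import Mathlib

section
/- With B = B(z,r) an open ball of positive measure and f ∈ L²(μ), the identity ∫_B T_ε(f χ_{B^c}) dμ = ∫_B T_ε(f) dμ + ∫_B (f - f_B) T_ε(χ_B) dμ holds for every ε > 0, where f_B = (1/μ(B)) ∫_B f dμ. -/
open MeasureTheory Metric Filter Set
open scoped ENNReal Topology

/-- Truncated singular integral operator `T_ε`. -/
noncomputable def Ttrunc {X : Type*} [MetricSpace X] [MeasurableSpace X]
    (μ : Measure X) (K : X → X → ℝ) (ε : ℝ) (f : X → ℝ) (x : X) : ℝ :=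
  ∫ y in (ball x ε)ᶜ, K x y * f y ∂μ

/-!
Write `T_ε v x = ∫ k_ε(x, y) v(y) dμ(y)` with the kernel `k_ε = K · 1_{d ≥ ε}`, which is bounded and
antisymmetric. For integrable `u, v` the integrand `k_ε(x, y) u(x) v(y)` is then integrable on `X × X`,
and swapping the variables gives `∫ u T_ε v = -∫ v T_ε u`. Taking `u = χ_B` this yields
`∫_B T_ε(f χ_B) = -∫_B f T_ε(χ_B)` and, for `f = 1`, `∫_B T_ε(χ_B) = 0`. Splitting
`f χ_{Bᶜ} = f - f χ_B`, the first identity gives the left-hand side, and the second one makes the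
constant `f_B` disappear from the last term.
-/

noncomputable def truncKernel {X : Type*} [MetricSpace X] (K : X → X → ℝ) (ε : ℝ) : X × X → ℝ :=
  {p | ε ≤ dist p.1 p.2}.indicator fun p => K p.1 p.2

section TruncKernel

variable {X : Type*} [MetricSpace X] {K : X → X → ℝ} {ε : ℝ}

lemma truncKernel_swap (hKanti : ∀ x y : X, x ≠ y → K x y = -K y x) (hε : 0 < ε) (p : X × X) :
    truncKernel K ε p.swap = -truncKernel K ε p := by
  obtain ⟨x, y⟩ := p
  by_cases h : ε ≤ dist x y
  · have hxy : y ≠ x := by rintro rfl; rw [dist_self] at h; linarith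
    simp [truncKernel, h, dist_comm y x, hKanti y x hxy]
  · simp [truncKernel, h, dist_comm y x]

lemma exists_abs_truncKernel_le
    (hKbdd : ∀ δ : ℝ, 0 < δ → ∃ M : ℝ, ∀ x y : X, δ < dist x y → |K x y| ≤ M) (hε : 0 < ε) :
    ∃ M : ℝ, ∀ p, |truncKernel K ε p| ≤ M := by
  obtain ⟨M, hM⟩ := hKbdd (ε / 2) (half_pos hε)
  refine ⟨max M 0, fun p => ?_⟩
  by_cases h : ε ≤ dist p.1 p.2
  · rw [truncKernel, indicator_of_mem (show p ∈ {q : X × X | ε ≤ dist q.1 q.2} from h)]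
    exact (hM _ _ (by linarith)).trans (le_max_left _ _)
  · simp [truncKernel, h]

lemma measurable_truncKernel [MeasurableSpace X] [OpensMeasurableSpace X] [SecondCountableTopology X]
    (hKmeas : Measurable fun p : X × X => K p.1 p.2) : Measurable (truncKernel K ε) :=
  hKmeas.indicator (measurableSet_le measurable_const measurable_dist)

end TruncKernel

section Integrals

variable {X : Type*} [MeasurableSpace X] {μ : Measure X}

lemma integral_indicator_mul {s : Set X} (hs : MeasurableSet s) (u h : X → ℝ) :
    ∫ x, s.indicator u x * h x ∂μ = ∫ x in s, u x * h x ∂μ := by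
  rw [← integral_indicator hs]
  simp_rw [indicator_mul_left]

lemma integral_indicator_one_mul {s : Set X} (hs : MeasurableSet s) (h : X → ℝ) :
    ∫ x, s.indicator (fun _ => (1 : ℝ)) x * h x ∂μ = ∫ x in s, h x ∂μ := by
  simp_rw [integral_indicator_mul hs, one_mul]

end Integrals

section Ttrunc

variable {X : Type*} [MetricSpace X] [MeasurableSpace X] [OpensMeasurableSpace X] {μ : Measure X}
  {K : X → X → ℝ} {ε M : ℝ} {u v w : X → ℝ}

lemma Ttrunc_eq_integral_truncKernel_mul (v : X → ℝ) (x : X) :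
    Ttrunc μ K ε v x = ∫ y, truncKernel K ε (x, y) * v y ∂μ := by
  rw [Ttrunc, ← integral_indicator measurableSet_ball.compl]
  congr 1 with y
  rw [indicator_mul_left]
  congr 1
  simp [truncKernel, indicator, dist_comm y x]

lemma mul_Ttrunc_eq_integral (u v : X → ℝ) (x : X) :
    u x * Ttrunc μ K ε v x = ∫ y, truncKernel K ε (x, y) * (u x * v y) ∂μ := by
  rw [Ttrunc_eq_integral_truncKernel_mul, ← integral_const_mul]
  congr 1 with y
  ring

variable [SecondCountableTopology X]

lemma integrable_truncKernel_mul (hKmeas : Measurable fun p : X × X => K p.1 p.2)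
    (hM : ∀ p, |truncKernel K ε p| ≤ M) (hv : Integrable v μ) (x : X) :
    Integrable (fun y => truncKernel K ε (x, y) * v y) μ :=
  hv.bdd_mul ((measurable_truncKernel hKmeas).comp measurable_prodMk_left).aestronglyMeasurable
    (ae_of_all _ fun y => hM (x, y))

lemma Ttrunc_sub (hKmeas : Measurable fun p : X × X => K p.1 p.2)
    (hM : ∀ p, |truncKernel K ε p| ≤ M) (hv : Integrable v μ) (hw : Integrable w μ) (x : X) :
    Ttrunc μ K ε (v - w) x = Ttrunc μ K ε v x - Ttrunc μ K ε w x := by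
  simp only [Ttrunc_eq_integral_truncKernel_mul, Pi.sub_apply, mul_sub]
  exact integral_sub (integrable_truncKernel_mul hKmeas hM hv x)
    (integrable_truncKernel_mul hKmeas hM hw x)

lemma integrable_truncKernel_mul_prod (hKmeas : Measurable fun p : X × X => K p.1 p.2)
    (hM : ∀ p, |truncKernel K ε p| ≤ M) (hu : Integrable u μ) (hv : Integrable v μ) :
    Integrable (fun p : X × X => truncKernel K ε p * (u p.1 * v p.2)) (μ.prod μ) :=
  (hu.mul_prod hv).bdd_mul (measurable_truncKernel hKmeas).aestronglyMeasurable (ae_of_all _ hM)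

variable [SFinite μ]

lemma integrable_mul_Ttrunc (hKmeas : Measurable fun p : X × X => K p.1 p.2)
    (hM : ∀ p, |truncKernel K ε p| ≤ M) (hu : Integrable u μ) (hv : Integrable v μ) :
    Integrable (fun x => u x * Ttrunc μ K ε v x) μ := by
  simp_rw [mul_Ttrunc_eq_integral]
  exact (integrable_truncKernel_mul_prod hKmeas hM hu hv).integral_prod_left

lemma integrable_Ttrunc [IsFiniteMeasure μ] (hKmeas : Measurable fun p : X × X => K p.1 p.2)
    (hM : ∀ p, |truncKernel K ε p| ≤ M) (hv : Integrable v μ) :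
    Integrable (Ttrunc μ K ε v) μ := by
  simpa using integrable_mul_Ttrunc hKmeas hM (integrable_const (1 : ℝ)) hv

lemma integral_mul_Ttrunc_eq_integral_prod (hKmeas : Measurable fun p : X × X => K p.1 p.2)
    (hM : ∀ p, |truncKernel K ε p| ≤ M) (hu : Integrable u μ) (hv : Integrable v μ) :
    ∫ x, u x * Ttrunc μ K ε v x ∂μ = ∫ p, truncKernel K ε p * (u p.1 * v p.2) ∂μ.prod μ := by
  simp_rw [mul_Ttrunc_eq_integral]
  exact (integral_prod _ (integrable_truncKernel_mul_prod hKmeas hM hu hv)).symm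

lemma integral_mul_Ttrunc_eq_neg (hKmeas : Measurable fun p : X × X => K p.1 p.2)
    (hKanti : ∀ x y : X, x ≠ y → K x y = -K y x) (hε : 0 < ε)
    (hM : ∀ p, |truncKernel K ε p| ≤ M) (hu : Integrable u μ) (hv : Integrable v μ) :
    ∫ x, u x * Ttrunc μ K ε v x ∂μ = -∫ x, v x * Ttrunc μ K ε u x ∂μ := by
  rw [integral_mul_Ttrunc_eq_integral_prod hKmeas hM hu hv,
    integral_mul_Ttrunc_eq_integral_prod hKmeas hM hv hu, ← integral_prod_swap, ← integral_neg]
  congr 1 with p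
  rw [truncKernel_swap hKanti hε]
  simp only [Prod.fst_swap, Prod.snd_swap]
  ring

variable [IsFiniteMeasure μ] {s : Set X}

lemma setIntegral_Ttrunc_indicator (hKmeas : Measurable fun p : X × X => K p.1 p.2)
    (hKanti : ∀ x y : X, x ≠ y → K x y = -K y x) (hε : 0 < ε)
    (hM : ∀ p, |truncKernel K ε p| ≤ M) (hs : MeasurableSet s) (hv : Integrable v μ) :
    ∫ x in s, Ttrunc μ K ε (s.indicator v) x ∂μ =
      -∫ x in s, v x * Ttrunc μ K ε (s.indicator fun _ => (1 : ℝ)) x ∂μ := by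
  rw [← integral_indicator_one_mul hs, ← integral_indicator_mul hs,
    integral_mul_Ttrunc_eq_neg hKmeas hKanti hε hM ((integrable_const 1).indicator hs)
      (hv.indicator hs)]

lemma setIntegral_Ttrunc_indicator_one (hKmeas : Measurable fun p : X × X => K p.1 p.2)
    (hKanti : ∀ x y : X, x ≠ y → K x y = -K y x) (hε : 0 < ε)
    (hM : ∀ p, |truncKernel K ε p| ≤ M) (hs : MeasurableSet s) :
    ∫ x in s, Ttrunc μ K ε (s.indicator fun _ => (1 : ℝ)) x ∂μ = 0 := by
  have h := setIntegral_Ttrunc_indicator (μ := μ) hKmeas hKanti hε hM hs (integrable_const 1)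
  simp only [one_mul] at h
  linarith

end Ttrunc

theorem truncated_ball_decomposition_identity_general
    {X : Type*} [MetricSpace X] [TopologicalSpace.SeparableSpace X]
    [MeasurableSpace X] [BorelSpace X]
    (μ : Measure X) [IsFiniteMeasure μ]
    (K : X → X → ℝ)
    (hKmeas : Measurable (fun p : X × X => K p.1 p.2))
    (hKanti : ∀ x y : X, x ≠ y → K x y = -K y x)
    (hKbdd : ∀ δ : ℝ, 0 < δ → ∃ M : ℝ, ∀ x y : X, δ < dist x y → |K x y| ≤ M)
    (z : X) (r : ℝ)
    (f : X → ℝ) (hf : MemLp f 2 μ)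
    (ε : ℝ) (hε : 0 < ε) :
    ∫ x in ball z r, Ttrunc μ K ε ((ball z r)ᶜ.indicator f) x ∂μ =
      ∫ x in ball z r, Ttrunc μ K ε f x ∂μ +
      ∫ x in ball z r,
        (f x - ((μ (ball z r)).toReal)⁻¹ * ∫ y in ball z r, f y ∂μ) *
          Ttrunc μ K ε ((ball z r).indicator fun _ => (1 : ℝ)) x ∂μ := by
  have : SecondCountableTopology X := UniformSpace.secondCountable_of_separable X
  obtain ⟨M, hM⟩ := exists_abs_truncKernel_le hKbdd hε
  have hfi : Integrable f μ := hf.integrable one_le_two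
  have hB : MeasurableSet (ball z r) := measurableSet_ball
  set χ : X → ℝ := (ball z r).indicator fun _ => 1
  have hχ : Integrable χ μ := (integrable_const 1).indicator hB
  have hsplit : ∀ x, Ttrunc μ K ε ((ball z r)ᶜ.indicator f) x =
      Ttrunc μ K ε f x - Ttrunc μ K ε ((ball z r).indicator f) x := fun x => by
    rw [indicator_compl]
    exact Ttrunc_sub hKmeas hM hfi (hfi.indicator hB) x
  simp_rw [hsplit, sub_mul]
  rw [integral_sub (integrable_Ttrunc hKmeas hM hfi).integrableOn
      (integrable_Ttrunc hKmeas hM (hfi.indicator hB)).integrableOn,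
    integral_sub (integrable_mul_Ttrunc hKmeas hM hfi hχ).integrableOn
      ((integrable_Ttrunc hKmeas hM hχ).const_mul _).integrableOn,
    integral_const_mul, setIntegral_Ttrunc_indicator hKmeas hKanti hε hM hB hfi,
    setIntegral_Ttrunc_indicator_one hKmeas hKanti hε hM hB]
  ring

/-- for an open ball `B = B(z,r)` of positive measure,
`f ∈ L²(μ)` and every `ε > 0`,
`∫_B T_ε(f χ_{Bᶜ}) dμ = ∫_B T_ε(f) dμ + ∫_B (f - f_B) T_ε(χ_B) dμ`,
where `f_B = (1/μ(B)) ∫_B f dμ`. -/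
theorem truncated_ball_decomposition_identity
    {X : Type*} [MetricSpace X] [TopologicalSpace.SeparableSpace X]
    [MeasurableSpace X] [BorelSpace X]
    (μ : Measure X) [IsFiniteMeasure μ]
    (K : X → X → ℝ)
    (hKmeas : Measurable (fun p : X × X => K p.1 p.2))
    (hKanti : ∀ x y : X, x ≠ y → K x y = -K y x)
    (hKbdd : ∀ δ : ℝ, 0 < δ → ∃ M : ℝ, ∀ x y : X, δ < dist x y → |K x y| ≤ M)
    (z : X) (r : ℝ) (hpos : 0 < μ (ball z r))
    (f : X → ℝ) (hf : MemLp f 2 μ)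
    (ε : ℝ) (hε : 0 < ε) :
    ∫ x in ball z r, Ttrunc μ K ε ((ball z r)ᶜ.indicator f) x ∂μ =
      ∫ x in ball z r, Ttrunc μ K ε f x ∂μ +
      ∫ x in ball z r,
        (f x - ((μ (ball z r)).toReal)⁻¹ * ∫ y in ball z r, f y ∂μ) *
          Ttrunc μ K ε ((ball z r).indicator fun _ => (1 : ℝ)) x ∂μ :=
  truncated_ball_decomposition_identity_general μ K hKmeas hKanti hKbdd z r f hf ε hε
end

section
/- Let μ be a finite Borel measure on ℝⁿ and C > 2^{n+1} a constant. Define F to be the set of points a ∈ ℝⁿ for which there exists 0 < ε < 1 such that μ(B(a, 2^{1-k}ε)) ≥ C μ(B(a, 2^{-k}ε)) for all k = 0, 1, 2, .... Then μ(F) = 0. -/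
/-!
Iterating the non-doubling inequality gives `μ(B(a, 2⁻ᵏε)) ≤ C⁻ᵏ μ(B(a, ε))`, whereas the
Lebesgue measure of these balls only shrinks by the factor `2ⁿ` at each step. Since `C > 2ⁿ`, at
every point of `F` the ratio of `μ` to Lebesgue measure on small balls has `lim inf` zero, and the
Besicovitch–Vitali covering theorem turns this into `μ(F ∩ U) ≤ t · vol(U)` for every `t > 0` and
every neighbourhood `U` of finite volume, so `F` is `μ`-null.
-/

open MeasureTheory Metric Filter Set Module
open scoped ENNReal NNReal Topology

theorem pow_mul_le_of_forall_mul_succ_le {M : Type*} [CommMonoid M] [Preorder M] [MulLeftMono M]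
    {c : M} {f : ℕ → M} (h : ∀ k, c * f (k + 1) ≤ f k) (k : ℕ) : c ^ k * f k ≤ f 0 := by
  induction k with
  | zero => simp
  | succ k ih =>
    calc c ^ (k + 1) * f (k + 1) = c ^ k * (c * f (k + 1)) := by rw [pow_succ, mul_assoc]
      _ ≤ c ^ k * f k := mul_le_mul_right (h k) _
      _ ≤ f 0 := ih

theorem ENNReal.eq_zero_of_forall_le_coe_mul {a b : ℝ≥0∞} (hb : b ≠ ∞)
    (h : ∀ t : ℝ≥0, 0 < t → a ≤ t * b) : a = 0 := by
  have hlim : Tendsto (fun t : ℝ≥0 => (t : ℝ≥0∞) * b) (𝓝[>] 0) (𝓝 0) := by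
    simpa using ENNReal.Tendsto.mul_const
      (ENNReal.tendsto_coe.2 (tendsto_nhdsWithin_of_tendsto_nhds (tendsto_id (x := 𝓝 0))))
      (Or.inr hb)
  exact nonpos_iff_eq_zero.1 <| ge_of_tendsto hlim <|
    eventually_nhdsWithin_of_forall fun t ht => h t ht

theorem measure_eq_zero_of_frequently_measure_closedBall_le {α : Type*} [MetricSpace α]
    [SecondCountableTopology α] [MeasurableSpace α] [BorelSpace α] [HasBesicovitchCovering α]
    (μ ν : Measure α) [SFinite μ] [IsLocallyFiniteMeasure ν] {s : Set α}
    (h : ∀ x ∈ s, ∀ t : ℝ≥0, 0 < t →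
      ∃ᶠ r in 𝓝[>] 0, μ (closedBall x r) ≤ t * ν (closedBall x r)) :
    μ s = 0 := by
  have hle : ∀ u, ∀ t : ℝ≥0, 0 < t → μ (s ∩ u) ≤ t * ν (s ∩ u) := fun u t ht =>
    (Besicovitch.vitaliFamily μ).measure_le_of_frequently_le (t • ν)
      Measure.AbsolutelyContinuous.rfl (s ∩ u) fun x hx =>
        (Besicovitch.tendsto_filterAt μ x).frequently (h x hx.1 t ht)
  refine measure_null_of_locally_null s fun x _ => ?_
  obtain ⟨u, hu, hνu⟩ := ν.finiteAt_nhds x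
  exact ⟨s ∩ u, inter_mem_nhdsWithin s hu, ENNReal.eq_zero_of_forall_le_coe_mul
    ((measure_mono inter_subset_right).trans_lt hνu).ne (hle u)⟩

section FiniteDimensional

variable {E : Type*} [NormedAddCommGroup E] [NormedSpace ℝ E] [FiniteDimensional ℝ E]
  [MeasurableSpace E] [BorelSpace E]

theorem MeasureTheory.Measure.addHaar_closedBall_div_two_pow (ν : Measure E)
    [ν.IsAddHaarMeasure] (x : E) {r : ℝ} (hr : 0 ≤ r) (k : ℕ) :
    (2 ^ finrank ℝ E) ^ k * ν (closedBall x (r / 2 ^ k)) = ν (closedBall x r) := by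
  rw [Measure.addHaar_closedBall' ν x (by positivity), Measure.addHaar_closedBall' ν x hr,
    ← mul_assoc]
  congr 1
  rw [← ENNReal.ofReal_ofNat 2, ← ENNReal.ofReal_pow zero_le_two,
    ← ENNReal.ofReal_pow (by positivity), ← ENNReal.ofReal_mul (by positivity)]
  congr 1
  rw [← pow_mul, mul_comm (finrank ℝ E) k, pow_mul, ← mul_pow, mul_div_cancel₀ r (by positivity)]

def IsNondoublingAt {α : Type*} [PseudoMetricSpace α] [MeasurableSpace α] (μ : Measure α)
    (c : ℝ≥0) (x : α) : Prop :=
  ∃ ε > 0, ∀ k : ℕ, c * μ (ball x (ε / 2 ^ (k + 1))) ≤ μ (ball x (ε / 2 ^ k))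

theorem IsNondoublingAt.frequently_measure_closedBall_le (μ ν : Measure E)
    [IsLocallyFiniteMeasure μ] [ν.IsAddHaarMeasure] {c : ℝ≥0} (hc : 2 ^ finrank ℝ E < c) {x : E}
    (hx : IsNondoublingAt μ c x) {t : ℝ≥0} (ht : 0 < t) :
    ∃ᶠ r in 𝓝[>] 0, μ (closedBall x r) ≤ t * ν (closedBall x r) := by
  obtain ⟨ε, hε, hnondoubling⟩ := hx
  have hradii : Tendsto (fun k : ℕ => ε / 2 / 2 ^ k) atTop (𝓝[>] 0) :=
    tendsto_nhdsWithin_of_tendsto_nhds_of_eventually_within _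
      (tendsto_const_nhds.div_atTop (tendsto_pow_atTop_atTop_of_one_lt one_lt_two))
      (Eventually.of_forall fun k => by simp only [mem_Ioi]; positivity)
  refine hradii.frequently (Eventually.frequently ?_)
  set g₀ := ν (closedBall x (ε / 2))
  have hg₀ : (t : ℝ≥0∞) * g₀ ≠ 0 :=
    mul_ne_zero (by exact_mod_cast ht.ne') (measure_closedBall_pos ν x (by positivity)).ne'
  have hgrowth :
      Tendsto (fun k : ℕ => ((c : ℝ≥0∞) / 2 ^ finrank ℝ E) ^ k * (t * g₀)) atTop (𝓝 ∞) := by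
    have hratio : 1 < (c : ℝ≥0∞) / 2 ^ finrank ℝ E := by
      rw [ENNReal.lt_div_iff_mul_lt (by simp) (by simp), one_mul]
      exact_mod_cast hc
    simpa [ENNReal.top_mul hg₀] using
      ENNReal.Tendsto.mul_const (b := t * g₀) (ENNReal.tendsto_pow_atTop_nhds_top_iff.2 hratio)
        (Or.inl ENNReal.top_ne_zero)
  filter_upwards [hgrowth.eventually_const_le (measure_ball_lt_top (μ := μ))] with k hk
  have hc₀ : (c : ℝ≥0∞) ^ k ≠ 0 := pow_ne_zero _ (by exact_mod_cast (pos_of_gt hc).ne')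
  calc μ (closedBall x (ε / 2 / 2 ^ k)) ≤ μ (ball x (ε / 2 ^ k)) :=
        measure_mono (closedBall_subset_ball (by field_simp; linarith))
    _ ≤ t * ν (closedBall x (ε / 2 / 2 ^ k)) := by
      rw [← ENNReal.mul_le_mul_iff_right hc₀ (by simp)]
      calc (c : ℝ≥0∞) ^ k * μ (ball x (ε / 2 ^ k)) ≤ μ (ball x ε) := by
            simpa using pow_mul_le_of_forall_mul_succ_le
              (f := fun k => μ (ball x (ε / 2 ^ k))) hnondoubling k
        _ ≤ ((c : ℝ≥0∞) / 2 ^ finrank ℝ E) ^ k * (t * g₀) := hk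
        _ = (c : ℝ≥0∞) ^ k * (t * ν (closedBall x (ε / 2 / 2 ^ k))) := by
          rw [show g₀ = _ from (ν.addHaar_closedBall_div_two_pow x (by positivity) k).symm,
            mul_left_comm (t : ℝ≥0∞), ← mul_assoc, ← mul_pow,
            ENNReal.div_mul_cancel (by simp) (by simp)]

theorem measure_setOf_isNondoublingAt_eq_zero (μ : Measure E) [IsLocallyFiniteMeasure μ]
    {c : ℝ≥0} (hc : 2 ^ finrank ℝ E < c) : μ {x | IsNondoublingAt μ c x} = 0 :=
  measure_eq_zero_of_frequently_measure_closedBall_le μ Measure.addHaar fun _ hx _ ht =>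
    hx.frequently_measure_closedBall_le μ Measure.addHaar hc ht

end FiniteDimensional

/-- for a finite Borel measure `μ` on `ℝⁿ` and `C > 2^{n+1}`,
the set `F` of points `a` admitting some `0 < ε < 1` with
`μ(B(a, 2^{1-k}ε)) ≥ C μ(B(a, 2^{-k}ε))` for all `k ≥ 0` is `μ`-null. -/
theorem nondoubling_set_null (n : ℕ)
    (μ : Measure (EuclideanSpace ℝ (Fin n))) [IsFiniteMeasure μ]
    (C : ℝ) (hC : (2 : ℝ) ^ (n + 1) < C) :
    μ {a : EuclideanSpace ℝ (Fin n) |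
        ∃ ε : ℝ, 0 < ε ∧ ε < 1 ∧ ∀ k : ℕ,
          ENNReal.ofReal C * μ (ball a ((2 : ℝ) ^ (-(k : ℤ)) * ε)) ≤
            μ (ball a ((2 : ℝ) ^ (1 - (k : ℤ)) * ε))} = 0 := by
  have hc : 2 ^ finrank ℝ (EuclideanSpace ℝ (Fin n)) < C.toNNReal := by
    rw [finrank_euclideanSpace_fin, Real.lt_toNNReal_iff_coe_lt]
    push_cast
    exact (pow_lt_pow_right₀ one_lt_two n.lt_succ_self).trans hC
  refine measure_mono_null (fun a ⟨ε, hε, _, hnondoubling⟩ => (⟨ε, hε, fun k => ?_⟩ :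
    IsNondoublingAt μ C.toNNReal a)) (measure_setOf_isNondoublingAt_eq_zero μ hc)
  have hradius (m : ℕ) : (2 : ℝ) ^ (-(m : ℤ)) * ε = ε / 2 ^ m := by
    rw [zpow_neg, zpow_natCast, inv_mul_eq_div]
  have hexponent : 1 - ((k + 1 : ℕ) : ℤ) = -(k : ℤ) := by push_cast; ring
  have h := hnondoubling (k + 1)
  rw [hexponent, hradius, hradius] at h
  exact h
end

section
/- Let μ be a finite Borel measure on ℝⁿ and C > 2^{n+1}. Then for μ-almost every a and every 0 < ε < 1 there exists an integer k ≥ 0 such that μ(B(a, 2^{1-k}ε)) ≤ C μ(B(a, 2^{-k}ε)) and μ(B(a, 2^{-j}ε)) ≤ C^{-j} μ(B(a, ε)) for j = 0, …, k-1. -/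
open MeasureTheory Metric Filter Set Module
open scoped ENNReal NNReal Topology

/-!
By Besicovitch differentiation, at `μ`-almost every point the ratio of Lebesgue measure to `μ`
on small balls has a finite limit, so `μ (B(a, r))` cannot decay faster than `rⁿ` along dyadic
radii. If doubling with a constant `C > 2ⁿ` failed at every scale `2⁻ᵏε`, then
`μ (B(a, 2⁻ᵏε)) ≤ C⁻ᵏ μ (B(a, ε))` would decay faster. So some scale is `C`-doubling, and at the
first such scale the failures at all earlier scales give the geometric bound.
-/

namespace ENNReal

theorem le_inv_pow_mul_of_forall_mul_le {u : ℕ → ℝ≥0∞} {c : ℝ≥0∞} (hc₀ : c ≠ 0) (hc : c ≠ ∞)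
    {n : ℕ} (h : ∀ k < n, c * u (k + 1) ≤ u k) : u n ≤ c⁻¹ ^ n * u 0 := by
  induction n with
  | zero => simp
  | succ n ih =>
    calc u (n + 1) = c⁻¹ * (c * u (n + 1)) := (ENNReal.inv_mul_cancel_left hc₀ hc).symm
      _ ≤ c⁻¹ * u n := by gcongr; exact h n n.lt_succ_self
      _ ≤ c⁻¹ * (c⁻¹ ^ n * u 0) := by gcongr; exact ih fun k hk => h k (hk.trans n.lt_succ_self)
      _ = c⁻¹ ^ (n + 1) * u 0 := by rw [pow_succ', mul_assoc]

theorem tendsto_pow_mul_atTop_nhds_zero_of_forall_mul_le {u : ℕ → ℝ≥0∞} {b c : ℝ≥0∞}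
    (hbc : b < c) (hc : c ≠ ∞) (hu : u 0 ≠ ∞) (h : ∀ k, c * u (k + 1) ≤ u k) :
    Tendsto (fun k => b ^ k * u k) atTop (𝓝 0) := by
  have hc₀ : c ≠ 0 := (zero_le.trans_lt hbc).ne'
  have hq : b * c⁻¹ < 1 := by
    rwa [← div_eq_mul_inv, ENNReal.div_lt_iff (Or.inl hc₀) (Or.inl hc), one_mul]
  have hlim : Tendsto (fun k => (b * c⁻¹) ^ k * u 0) atTop (𝓝 0) := by
    simpa using ENNReal.Tendsto.mul_const (ENNReal.tendsto_pow_atTop_nhds_zero_of_lt_one hq)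
      (Or.inr hu)
  refine tendsto_of_tendsto_of_tendsto_of_le_of_le tendsto_const_nhds hlim (fun _ => zero_le)
    fun k => ?_
  calc b ^ k * u k ≤ b ^ k * (c⁻¹ ^ k * u 0) := by
        gcongr; exact le_inv_pow_mul_of_forall_mul_le hc₀ hc fun i _ => h i
    _ = (b * c⁻¹) ^ k * u 0 := by rw [mul_pow, mul_assoc]

end ENNReal

theorem Besicovitch.ae_exists_eventually_measure_closedBall_le_mul {β : Type*} [MetricSpace β]
    [MeasurableSpace β] [BorelSpace β] [SecondCountableTopology β] [HasBesicovitchCovering β]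
    (μ ν : Measure β) [IsLocallyFiniteMeasure μ] [IsLocallyFiniteMeasure ν] :
    ∀ᵐ x ∂μ, ∃ K : ℝ≥0, ∀ᶠ r in 𝓝[>] 0, ν (closedBall x r) ≤ K * μ (closedBall x r) := by
  filter_upwards [Besicovitch.ae_tendsto_rnDeriv ν μ, Measure.rnDeriv_lt_top ν μ] with x hx hfin
  refine ⟨(ν.rnDeriv μ x).toNNReal + 1, ?_⟩
  have hlt : ν.rnDeriv μ x < ((ν.rnDeriv μ x).toNNReal + 1 : ℝ≥0) := by
    rw [ENNReal.coe_add, ENNReal.coe_toNNReal hfin.ne, ENNReal.coe_one]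
    exact ENNReal.lt_add_right hfin.ne one_ne_zero
  filter_upwards [hx.eventually (gt_mem_nhds hlt)] with r hr
  exact (ENNReal.div_le_iff_le_mul (Or.inr ENNReal.coe_ne_top) (Or.inr (by simp))).1 hr.le

theorem ae_not_tendsto_two_pow_finrank_mul_measure_ball {E : Type*} [NormedAddCommGroup E]
    [NormedSpace ℝ E] [FiniteDimensional ℝ E] [MeasurableSpace E] [BorelSpace E] (μ : Measure E)
    [IsLocallyFiniteMeasure μ] :
    ∀ᵐ x ∂μ, ∀ ρ > 0,
      ¬ Tendsto (fun k : ℕ => (2 ^ finrank ℝ E) ^ k * μ (ball x (ρ / 2 ^ k))) atTop (𝓝 0) := by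
  set ν : Measure E := Measure.addHaar
  filter_upwards [Besicovitch.ae_exists_eventually_measure_closedBall_le_mul μ ν]
    with x ⟨K, hK⟩ ρ hρ hlim
  have hradii : Tendsto (fun k : ℕ => ρ / 2 ^ (k + 1)) atTop (𝓝[>] 0) := by
    refine tendsto_nhdsWithin_of_tendsto_nhds_of_eventually_within _ ?_
      (Eventually.of_forall fun k => div_pos hρ (by positivity))
    exact tendsto_const_nhds.div_atTop
      ((tendsto_pow_atTop_atTop_of_one_lt one_lt_two).comp (tendsto_add_atTop_nat 1))
  have hscale : ∀ k : ℕ,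
      (2 ^ finrank ℝ E) ^ k * ν (closedBall x (ρ / 2 ^ (k + 1))) = ν (closedBall x (ρ / 2)) := by
    intro k
    rw [Measure.addHaar_closedBall ν x (by positivity),
      Measure.addHaar_closedBall ν x (by positivity), ← mul_assoc]
    congr 1
    rw [← ENNReal.ofReal_ofNat 2, ← ENNReal.ofReal_pow zero_le_two,
      ← ENNReal.ofReal_pow (by positivity), ← ENNReal.ofReal_mul (by positivity)]
    congr 1
    rw [pow_right_comm, ← mul_pow]
    congr 1
    field_simp
    ring
  have hle : ∀ᶠ k in atTop, ν (closedBall x (ρ / 2)) ≤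
      K * ((2 ^ finrank ℝ E) ^ k * μ (ball x (ρ / 2 ^ k))) := by
    filter_upwards [hradii.eventually hK] with k hk
    have hsub : closedBall x (ρ / 2 ^ (k + 1)) ⊆ ball x (ρ / 2 ^ k) :=
      closedBall_subset_ball (div_lt_div_of_pos_left hρ (by positivity)
        (pow_lt_pow_right₀ one_lt_two k.lt_succ_self))
    calc ν (closedBall x (ρ / 2)) = (2 ^ finrank ℝ E) ^ k * ν (closedBall x (ρ / 2 ^ (k + 1))) :=
          (hscale k).symm
      _ ≤ (2 ^ finrank ℝ E) ^ k * (K * μ (ball x (ρ / 2 ^ k))) := by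
          gcongr; exact hk.trans (by gcongr)
      _ = K * ((2 ^ finrank ℝ E) ^ k * μ (ball x (ρ / 2 ^ k))) := by ring
  have hzero : ν (closedBall x (ρ / 2)) ≤ 0 := by
    simpa using ge_of_tendsto (ENNReal.Tendsto.const_mul hlim (Or.inr ENNReal.coe_ne_top)) hle
  exact (measure_closedBall_pos ν x (by positivity)).ne' (nonpos_iff_eq_zero.1 hzero)

/-- for a finite Borel measure `μ` on `ℝⁿ` and `C > 2^{n+1}`,
for `μ`-a.e. `a` and every `0 < ε < 1` there is `k ≥ 0` with
`μ(B(a, 2^{1-k}ε)) ≤ C μ(B(a, 2^{-k}ε))` and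
`μ(B(a, 2^{-j}ε)) ≤ C^{-j} μ(B(a, ε))` for `j = 0, …, k-1`. -/
theorem ae_doubling_scale_exists (n : ℕ)
    (μ : Measure (EuclideanSpace ℝ (Fin n))) [IsFiniteMeasure μ]
    (C : ℝ) (hC : (2 : ℝ) ^ (n + 1) < C) :
    ∀ᵐ a ∂μ, ∀ ε : ℝ, 0 < ε → ε < 1 →
      ∃ k : ℕ,
        μ (ball a ((2 : ℝ) ^ (1 - (k : ℤ)) * ε)) ≤
          ENNReal.ofReal C * μ (ball a ((2 : ℝ) ^ (-(k : ℤ)) * ε)) ∧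
        ∀ j : ℕ, j < k →
          μ (ball a ((2 : ℝ) ^ (-(j : ℤ)) * ε)) ≤
            ENNReal.ofReal (C ^ (-(j : ℤ))) * μ (ball a ε) := by
  have hC₀ : 0 < C := lt_trans (by positivity) hC
  have hCn : (2 : ℝ≥0∞) ^ n < ENNReal.ofReal C := by
    rw [← ENNReal.ofReal_ofNat 2, ← ENNReal.ofReal_pow zero_le_two,
      ENNReal.ofReal_lt_ofReal_iff hC₀]
    exact (pow_lt_pow_right₀ one_lt_two n.lt_succ_self).trans hC
  have hradius : ∀ (k : ℕ) (ε : ℝ), (2 : ℝ) ^ (-(k : ℤ)) * ε = ε / 2 ^ k := fun k ε => by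
    rw [zpow_neg, zpow_natCast, inv_mul_eq_div]
  have hradius_succ : ∀ k : ℕ, (1 - ((k + 1 : ℕ) : ℤ)) = -(k : ℤ) := fun k => by push_cast; ring
  filter_upwards [ae_not_tendsto_two_pow_finrank_mul_measure_ball μ] with a ha ε hε _
  have hdoubling : ∃ k : ℕ, μ (ball a ((2 : ℝ) ^ (1 - (k : ℤ)) * ε)) ≤
      ENNReal.ofReal C * μ (ball a ((2 : ℝ) ^ (-(k : ℤ)) * ε)) := by
    by_contra! hfail
    refine ha ε hε ?_
    rw [finrank_euclideanSpace_fin]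
    refine ENNReal.tendsto_pow_mul_atTop_nhds_zero_of_forall_mul_le hCn ENNReal.ofReal_ne_top
      (measure_ne_top μ _) fun k => ?_
    simpa only [hradius_succ, hradius] using (hfail (k + 1)).le
  refine ⟨Nat.find hdoubling, Nat.find_spec hdoubling, fun j hj => ?_⟩
  have hgeom := ENNReal.le_inv_pow_mul_of_forall_mul_le (u := fun k : ℕ => μ (ball a (ε / 2 ^ k)))
    (ENNReal.ofReal_pos.2 hC₀).ne' ENNReal.ofReal_ne_top (n := j) fun i hi => by
      have := not_le.1 (Nat.find_min hdoubling (by omega : i + 1 < Nat.find hdoubling))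
      simpa only [hradius_succ, hradius] using this.le
  rw [hradius, zpow_neg, zpow_natCast, ENNReal.ofReal_inv_of_pos (pow_pos hC₀ j),
    ENNReal.ofReal_pow hC₀.le, ENNReal.inv_pow]
  simpa only [pow_zero, div_one] using hgeom
end

section
/- Suppose the weak (1,1) inequality μ({x : T*(f)(x) > t}) ≤ C‖f‖₁/t holds. Let E ⊆ X be a closed set such that lim_{ε→0} T_ε(χ_E)(x) exists for μ-a.e. x ∈ E. Then for every t > 0, μ({x : limsup_{ε,δ→0} |T_ε(1)(x) - T_δ(1)(x)| > t}) ≤ 2C μ(X \ E)/t. Consequently, if such closed sets E_k exist with μ(X \ E_k) → 0, then lim_{ε→0} T_ε(1)(x) exists for μ-a.e. x ∈ X. -/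
/-!
Since `χ_E + χ_{Eᶜ} = 1`, the truncations `T_ε(1)(x)` and `T_ε(χ_{Eᶜ})(x)` differ by
`T_ε(χ_E)(x)`, which converges for a.e. `x`: on `E` by hypothesis, and off the closed set `E`
because `χ_E` vanishes near `x`. So wherever the oscillation of `T_ε(1)(x)` exceeds `t`, some
`|T_ε(χ_{Eᶜ})(x)|` exceeds `t/2`, and the weak (1,1) inequality for `χ_{Eᶜ}` gives the bound.
For the second claim the bound forces the oscillation to vanish a.e., and vanishing oscillation
gives convergence as long as `T_ε(1)(x)` stays bounded as `ε → 0`.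

Both `Tmax` and the real `limsup` take the junk value `0` on unbounded families, so boundedness has
to be proved separately. For a.e. `x ∈ E` it comes from the weak inequality applied to
`χ_{Eᶜ \ E_δ}`, where `E_δ` is the `δ`-thickening of `E`: this function vanishes near `E`, so its
maximal function is a genuine supremum there, and it differs from `χ_{Eᶜ}` on a set of small
measure.
-/

open MeasureTheory Metric Filter Set
open scoped ENNReal Topology

/-- Maximal singular integral operator `T*`. -/
noncomputable def Tmax {X : Type*} [MetricSpace X] [MeasurableSpace X]
    (μ : Measure X) (K : X → X → ℝ) (f : X → ℝ) (x : X) : ℝ :=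
  ⨆ ε : {e : ℝ // 0 < e}, |Ttrunc μ K ε f x|

noncomputable def limsupOsc {α : Type*} (u : α → ℝ) (l : Filter α) : ℝ :=
  limsup (fun p : α × α => |u p.1 - u p.2|) (l ×ˢ l)

section LimsupOsc

variable {α : Type*} {l : Filter α} {u v w : α → ℝ}

lemma isBoundedUnder_of_lt_limsupOsc {t : ℝ} (ht : 0 ≤ t) (h : t < limsupOsc u l) :
    IsBoundedUnder (· ≤ ·) (l ×ˢ l) fun p => |u p.1 - u p.2| := by
  by_contra hnb
  rw [limsupOsc, Real.limsup_of_not_isBoundedUnder hnb] at h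
  linarith

lemma isBoundedUnder_abs_of_isBoundedUnder_abs_sub [NeBot l]
    (h : IsBoundedUnder (· ≤ ·) (l ×ˢ l) fun p => |u p.1 - u p.2|) :
    IsBoundedUnder (· ≤ ·) l fun a => |u a| := by
  obtain ⟨A, hA⟩ := h.eventually_le
  obtain ⟨s, hs, s', hs', hss'⟩ := eventually_prod_iff.1 hA
  obtain ⟨b, hb⟩ := hs'.exists
  refine isBoundedUnder_of_eventually_le (a := |u b| + A) ?_
  filter_upwards [hs] with a ha
  linarith [hss' ha hb, abs_sub_abs_le_abs_sub (u a) (u b)]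

lemma isBoundedUnder_abs_of_eventually_eq_add (h : ∀ᶠ a in l, u a = v a + w a)
    (hv : IsBoundedUnder (· ≤ ·) l fun a => |v a|) (hw : IsBoundedUnder (· ≤ ·) l fun a => |w a|) :
    IsBoundedUnder (· ≤ ·) l fun a => |u a| :=
  (isBoundedUnder_le_add hv hw).mono_le <| h.mono fun a ha => by
    simpa only [Pi.add_apply, ha] using abs_add_le (v a) (w a)

lemma exists_tendsto_of_limsupOsc_nonpos [NeBot l] (hu : IsBoundedUnder (· ≤ ·) l fun a => |u a|)
    (h : limsupOsc u l ≤ 0) : ∃ L, Tendsto u l (𝓝 L) := by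
  obtain ⟨A, hA⟩ := hu.eventually_le
  have hbdd : IsBoundedUnder (· ≤ ·) (l ×ˢ l) fun p => |u p.1 - u p.2| := by
    refine isBoundedUnder_of_eventually_le (a := A + A) ?_
    filter_upwards [hA.prod_inl l, hA.prod_inr l] with p h1 h2
    exact (abs_sub _ _).trans (add_le_add h1 h2)
  refine cauchy_map_iff_exists_tendsto.1 (cauchy_map_iff.2 ⟨inferInstance, ?_⟩)
  rw [Metric.uniformity_basis_dist.tendsto_right_iff]
  intro η hη
  filter_upwards [eventually_lt_of_limsup_lt (h.trans_lt hη) hbdd] with p hp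
  rwa [Real.dist_eq]

lemma frequently_lt_abs_sub_of_lt_limsupOsc [NeBot l] {L t : ℝ} (hv : Tendsto v l (𝓝 L))
    (huvw : ∀ᶠ a in l, u a = v a + w a) (h : t < limsupOsc u l) :
    ∃ᶠ p in l ×ˢ l, t < |w p.1 - w p.2| := by
  obtain ⟨s, hts, hs⟩ := exists_between h
  have hfreq : ∃ᶠ p in l ×ˢ l, s < |u p.1 - u p.2| :=
    frequently_lt_of_lt_limsup (isCoboundedUnder_le_of_le _ fun _ => abs_nonneg _) hs
  have hv0 : Tendsto (fun p : α × α => v p.1 - v p.2) (l ×ˢ l) (𝓝 0) := by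
    simpa using (hv.comp tendsto_fst).sub (hv.comp tendsto_snd)
  have hvsmall : ∀ᶠ p in l ×ˢ l, |v p.1 - v p.2| < s - t := by
    simpa [Real.dist_eq] using Metric.tendsto_nhds.1 hv0 (s - t) (sub_pos.2 hts)
  refine hfreq.mp ?_
  filter_upwards [hvsmall, huvw.prod_inl l, huvw.prod_inr l] with p hp h1 h2 hup
  have hsplit : u p.1 - u p.2 = (v p.1 - v p.2) + (w p.1 - w p.2) := by rw [h1, h2]; ring
  linarith [abs_add_le (v p.1 - v p.2) (w p.1 - w p.2), hsplit ▸ hup]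

end LimsupOsc

lemma abs_indicator_one_le {α : Type*} (S : Set α) (y : α) :
    |S.indicator (fun _ => (1 : ℝ)) y| ≤ 1 := by
  by_cases hy : y ∈ S <;> simp [hy]

section Truncations

variable {X : Type*} [MetricSpace X]

def BoundedOffDiagonal (K : X → X → ℝ) : Prop :=
  ∀ δ : ℝ, 0 < δ → ∃ M : ℝ, ∀ x y : X, δ < dist x y → |K x y| ≤ M

lemma BoundedOffDiagonal.exists_bound {K : X → X → ℝ} (hK : BoundedOffDiagonal K) {δ : ℝ}
    (hδ : 0 < δ) : ∃ M, 0 ≤ M ∧ ∀ x y, δ ≤ dist x y → |K x y| ≤ M := by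
  obtain ⟨M, hM⟩ := hK (δ / 2) (half_pos hδ)
  exact ⟨max M 0, le_max_right _ _, fun x y hxy =>
    (hM x y (by linarith)).trans (le_max_left _ _)⟩

lemma le_dist_of_mem_compl_ball {x y : X} {ε : ℝ} (hy : y ∈ (ball x ε)ᶜ) : ε ≤ dist x y := by
  simpa [dist_comm] using hy

variable [MeasurableSpace X] {μ : Measure X} {K : X → X → ℝ}

def WeakTypeOneOne (μ : Measure X) (K : X → X → ℝ) (C : ℝ) : Prop :=
  ∀ f : X → ℝ, Integrable f μ → ∀ t : ℝ, 0 < t →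
    μ {x | t < Tmax μ K f x} ≤ ENNReal.ofReal (C * (∫ x, |f x| ∂μ) / t)

lemma measure_lt_Tmax_indicator_le [IsFiniteMeasure μ] {C : ℝ} (hweak : WeakTypeOneOne μ K C)
    {S : Set X} (hS : MeasurableSet S) {t : ℝ} (ht : 0 < t) :
    μ {x | t < Tmax μ K (S.indicator fun _ => (1 : ℝ)) x} ≤
      ENNReal.ofReal (C * (μ S).toReal / t) := by
  have hint : ∫ x, |S.indicator (fun _ => (1 : ℝ)) x| ∂μ = μ.real S := by
    rw [← integral_indicator_one hS]
    congr 1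
    ext y
    by_cases hy : y ∈ S <;> simp [hy]
  refine (hweak _ ((integrable_const 1).indicator hS) t ht).trans_eq ?_
  rw [hint, measureReal_def]

lemma lt_Tmax_of_lt_abs_Ttrunc {f : X → ℝ} {x : X} {ε t : ℝ}
    (hbdd : BddAbove (range fun ε : {e : ℝ // 0 < e} => |Ttrunc μ K ε f x|)) (hε : 0 < ε)
    (h : t < |Ttrunc μ K ε f x|) : t < Tmax μ K f x :=
  h.trans_le (le_ciSup hbdd (⟨ε, hε⟩ : {e : ℝ // 0 < e}))

lemma Ttrunc_add {x : X} {ε : ℝ} {f g : X → ℝ}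
    (hf : IntegrableOn (fun y => K x y * f y) (ball x ε)ᶜ μ)
    (hg : IntegrableOn (fun y => K x y * g y) (ball x ε)ᶜ μ) :
    Ttrunc μ K ε (f + g) x = Ttrunc μ K ε f x + Ttrunc μ K ε g x := by
  simp only [Ttrunc, Pi.add_apply, mul_add]
  exact integral_add hf hg

lemma abs_Ttrunc_le [IsFiniteMeasure μ] {x : X} {ε : ℝ} {f : X → ℝ} {A : ℝ}
    (hA : 0 ≤ A) (hfA : ∀ y, ε ≤ dist x y → |K x y * f y| ≤ A) :
    |Ttrunc μ K ε f x| ≤ A * μ.real univ := by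
  rw [Ttrunc, ← Real.norm_eq_abs]
  refine (norm_setIntegral_le_of_norm_le_const (measure_lt_top μ _)
    fun y hy => hfA y (le_dist_of_mem_compl_ball hy)).trans ?_
  exact mul_le_mul_of_nonneg_left (measureReal_mono (subset_univ _)) hA

lemma abs_Ttrunc_indicator_le [IsFiniteMeasure μ] {x : X} {ε M : ℝ} {S : Set X}
    (hS : MeasurableSet S) (hM0 : 0 ≤ M) (hM : ∀ y, ε ≤ dist x y → |K x y| ≤ M) :
    |Ttrunc μ K ε (S.indicator fun _ => (1 : ℝ)) x| ≤ M * μ.real S := by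
  have hKS : (fun y => K x y * S.indicator (fun _ => (1 : ℝ)) y) = S.indicator (K x) := by
    ext y
    by_cases hy : y ∈ S <;> simp [hy]
  rw [Ttrunc, hKS, setIntegral_indicator hS, ← Real.norm_eq_abs]
  refine (norm_setIntegral_le_of_norm_le_const (measure_lt_top μ _)
    fun y hy => hM y (le_dist_of_mem_compl_ball hy.1)).trans ?_
  exact mul_le_mul_of_nonneg_left (measureReal_mono inter_subset_right) hM0

lemma exists_abs_Ttrunc_le [IsFiniteMeasure μ] (hK : BoundedOffDiagonal K) {δ : ℝ} (hδ : 0 < δ)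
    {f : X → ℝ} {B : ℝ} (hfB : ∀ y, |f y| ≤ B) (x : X) :
    ∃ A, ∀ ε, δ ≤ ε → |Ttrunc μ K ε f x| ≤ A := by
  obtain ⟨M, hM0, hM⟩ := hK.exists_bound hδ
  refine ⟨M * B * μ.real univ, fun ε hε => abs_Ttrunc_le
    (mul_nonneg hM0 ((abs_nonneg _).trans (hfB x))) fun y hy => ?_⟩
  rw [abs_mul]
  exact mul_le_mul (hM x y (hε.trans hy)) (hfB y) (abs_nonneg _) hM0

lemma bddAbove_abs_Ttrunc_of_isBoundedUnder [IsFiniteMeasure μ] (hK : BoundedOffDiagonal K)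
    {f : X → ℝ} {B : ℝ} (hfB : ∀ y, |f y| ≤ B) {x : X}
    (h : IsBoundedUnder (· ≤ ·) (𝓝[>] 0) fun ε => |Ttrunc μ K ε f x|) :
    BddAbove (range fun ε : {e : ℝ // 0 < e} => |Ttrunc μ K ε f x|) := by
  obtain ⟨A, hA⟩ := h.eventually_le
  obtain ⟨c, hc, hsub⟩ := mem_nhdsGT_iff_exists_Ioo_subset.1 hA
  obtain ⟨A', hA'⟩ := exists_abs_Ttrunc_le (μ := μ) hK hc hfB x
  refine ⟨max A A', ?_⟩
  rintro _ ⟨⟨ε, hε⟩, rfl⟩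
  rcases lt_or_ge ε c with hεc | hεc
  · exact (hsub ⟨hε, hεc⟩).trans (le_max_left _ _)
  · exact (hA' ε hεc).trans (le_max_right _ _)

variable [BorelSpace X]

lemma integrableOn_compl_ball [IsFiniteMeasure μ] (hKmeas : Measurable fun p : X × X => K p.1 p.2)
    (hK : BoundedOffDiagonal K) (x : X) {ε : ℝ} (hε : 0 < ε) {f : X → ℝ} (hf : Measurable f)
    {B : ℝ} (hfB : ∀ y, |f y| ≤ B) :
    IntegrableOn (fun y => K x y * f y) (ball x ε)ᶜ μ := by
  obtain ⟨M, -, hM⟩ := hK.exists_bound hε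
  refine Integrable.mono' (integrable_const (M * B))
    ((hKmeas.comp measurable_prodMk_left).mul hf).aestronglyMeasurable ?_
  refine ae_restrict_of_forall_mem measurableSet_ball.compl fun y hy => ?_
  rw [Real.norm_eq_abs, abs_mul]
  exact mul_le_mul (hM x y (le_dist_of_mem_compl_ball hy)) (hfB y) (abs_nonneg _)
    ((abs_nonneg _).trans (hM x y (le_dist_of_mem_compl_ball hy)))

lemma Ttrunc_indicator_union [IsFiniteMeasure μ] (hKmeas : Measurable fun p : X × X => K p.1 p.2)
    (hK : BoundedOffDiagonal K) (x : X) {ε : ℝ} (hε : 0 < ε) {S T : Set X}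
    (hS : MeasurableSet S) (hT : MeasurableSet T) (hST : Disjoint S T) :
    Ttrunc μ K ε ((S ∪ T).indicator fun _ => (1 : ℝ)) x =
      Ttrunc μ K ε (S.indicator fun _ => 1) x + Ttrunc μ K ε (T.indicator fun _ => 1) x := by
  rw [← Ttrunc_add (integrableOn_compl_ball hKmeas hK x hε (measurable_const.indicator hS)
      (abs_indicator_one_le S)) (integrableOn_compl_ball hKmeas hK x hε
      (measurable_const.indicator hT) (abs_indicator_one_le T))]
  congr 1
  ext y
  exact congrFun (indicator_union_of_disjoint hST _) y

lemma Ttrunc_one_eq_add [IsFiniteMeasure μ] (hKmeas : Measurable fun p : X × X => K p.1 p.2)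
    (hK : BoundedOffDiagonal K) (x : X) {ε : ℝ} (hε : 0 < ε) {E : Set X} (hE : MeasurableSet E) :
    Ttrunc μ K ε (fun _ => (1 : ℝ)) x =
      Ttrunc μ K ε (E.indicator fun _ => 1) x + Ttrunc μ K ε (Eᶜ.indicator fun _ => 1) x := by
  rw [← Ttrunc_indicator_union hKmeas hK x hε hE hE.compl disjoint_compl_right, union_compl_self,
    indicator_univ]

lemma Ttrunc_eq_of_forall_mem_ball_eq_zero {x : X} {ε δ : ℝ} {f : X → ℝ} (hεδ : ε ≤ δ)
    (hf : ∀ y ∈ ball x δ, f y = 0) : Ttrunc μ K ε f x = Ttrunc μ K δ f x :=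
  setIntegral_eq_of_subset_of_forall_sdiff_eq_zero measurableSet_ball.compl
    (compl_subset_compl.2 (ball_subset_ball hεδ))
    fun y hy => by rw [hf y (not_not.1 hy.2), mul_zero]

lemma tendsto_Ttrunc_indicator_of_notMem {E : Set X} (hE : IsClosed E) {x : X} (hx : x ∉ E) :
    ∃ L, Tendsto (fun ε => Ttrunc μ K ε (E.indicator fun _ => (1 : ℝ)) x) (𝓝[>] 0) (𝓝 L) := by
  obtain ⟨δ, hδ, hball⟩ := Metric.isOpen_iff.1 hE.isOpen_compl x hx
  refine ⟨Ttrunc μ K δ (E.indicator fun _ => 1) x, tendsto_const_nhds.congr' ?_⟩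
  filter_upwards [Ioo_mem_nhdsGT hδ] with ε hε
  exact (Ttrunc_eq_of_forall_mem_ball_eq_zero hε.2.le fun y hy =>
    indicator_of_notMem (hball hy) _).symm

lemma bddAbove_abs_Ttrunc_of_forall_mem_ball_eq_zero [IsFiniteMeasure μ]
    (hK : BoundedOffDiagonal K) {f : X → ℝ} {B : ℝ} (hfB : ∀ y, |f y| ≤ B) {x : X} {δ : ℝ}
    (hδ : 0 < δ) (hf : ∀ y ∈ ball x δ, f y = 0) :
    BddAbove (range fun ε : {e : ℝ // 0 < e} => |Ttrunc μ K ε f x|) := by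
  refine bddAbove_abs_Ttrunc_of_isBoundedUnder hK hfB
    (isBoundedUnder_of_eventually_le (a := |Ttrunc μ K δ f x|) ?_)
  filter_upwards [Ioo_mem_nhdsGT hδ] with ε hε
  rw [Ttrunc_eq_of_forall_mem_ball_eq_zero hε.2.le hf]

end Truncations

section OscillationEstimate

variable {X : Type*} [MetricSpace X] [MeasurableSpace X] [BorelSpace X]
  {μ : Measure X} [IsFiniteMeasure μ] {K : X → X → ℝ}

lemma lt_Tmax_indicator_compl_of_lt_limsupOsc (hKmeas : Measurable fun p : X × X => K p.1 p.2)
    (hK : BoundedOffDiagonal K) {E : Set X} (hE : MeasurableSet E) {x : X}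
    (hconv : ∃ L, Tendsto (fun ε => Ttrunc μ K ε (E.indicator fun _ => (1 : ℝ)) x) (𝓝[>] 0) (𝓝 L))
    {t : ℝ} (ht : 0 < t)
    (hosc : t < limsupOsc (fun ε => Ttrunc μ K ε (fun _ => (1 : ℝ)) x) (𝓝[>] 0)) :
    t / 2 < Tmax μ K (Eᶜ.indicator fun _ => (1 : ℝ)) x := by
  obtain ⟨L, hL⟩ := hconv
  set w := fun ε => Ttrunc μ K ε (Eᶜ.indicator fun _ => (1 : ℝ)) x
  have hsplit : ∀ᶠ ε in 𝓝[>] (0 : ℝ), Ttrunc μ K ε (fun _ => (1 : ℝ)) x =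
      Ttrunc μ K ε (E.indicator fun _ => 1) x + w ε :=
    eventually_mem_nhdsWithin.mono fun ε hε => Ttrunc_one_eq_add hKmeas hK x hε hE
  have hw : IsBoundedUnder (· ≤ ·) (𝓝[>] 0) fun ε => |w ε| := by
    refine isBoundedUnder_abs_of_eventually_eq_add (v := fun ε => Ttrunc μ K ε (fun _ => 1) x)
      (w := fun ε => -Ttrunc μ K ε (E.indicator fun _ => 1) x) (hsplit.mono fun ε hε => by
        simp only [hε]; ring)
      (isBoundedUnder_abs_of_isBoundedUnder_abs_sub (isBoundedUnder_of_lt_limsupOsc ht.le hosc))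
      ?_
    simpa only [abs_neg] using hL.abs.isBoundedUnder_le
  have hbdd := bddAbove_abs_Ttrunc_of_isBoundedUnder hK (abs_indicator_one_le Eᶜ) hw
  have hpos : ∀ᶠ p : ℝ × ℝ in 𝓝[>] 0 ×ˢ 𝓝[>] 0, 0 < p.1 ∧ 0 < p.2 :=
    (eventually_mem_nhdsWithin.prod_inl _).and (eventually_mem_nhdsWithin.prod_inr _)
  obtain ⟨p, hp, hp1, hp2⟩ :=
    ((frequently_lt_abs_sub_of_lt_limsupOsc hL hsplit hosc).and_eventually hpos).exists
  rcases lt_or_ge (t / 2) |w p.1| with h1 | h1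
  · exact lt_Tmax_of_lt_abs_Ttrunc hbdd hp1 h1
  · refine lt_Tmax_of_lt_abs_Ttrunc hbdd hp2 ?_
    linarith [abs_sub (w p.1) (w p.2)]

lemma measure_lt_limsupOsc_le (hKmeas : Measurable fun p : X × X => K p.1 p.2)
    (hK : BoundedOffDiagonal K) {C : ℝ} (hweak : WeakTypeOneOne μ K C) {E : Set X}
    (hE : IsClosed E)
    (hae : ∀ᵐ x ∂μ, x ∈ E → ∃ L, Tendsto (fun ε => Ttrunc μ K ε (E.indicator fun _ => (1 : ℝ)) x)
      (𝓝[>] 0) (𝓝 L))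
    {t : ℝ} (ht : 0 < t) :
    μ {x | t < limsupOsc (fun ε => Ttrunc μ K ε (fun _ => (1 : ℝ)) x) (𝓝[>] 0)} ≤
      ENNReal.ofReal (2 * C * (μ Eᶜ).toReal / t) := by
  have hconv : ∀ᵐ x ∂μ, ∃ L, Tendsto (fun ε => Ttrunc μ K ε (E.indicator fun _ => (1 : ℝ)) x)
      (𝓝[>] 0) (𝓝 L) := by
    filter_upwards [hae] with x hx
    by_cases hxE : x ∈ E
    · exact hx hxE
    · exact tendsto_Ttrunc_indicator_of_notMem hE hxE
  calc _ ≤ μ ({x | ¬ ∃ L, Tendsto (fun ε => Ttrunc μ K ε (E.indicator fun _ => (1 : ℝ)) x)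
          (𝓝[>] 0) (𝓝 L)} ∪ {x | t / 2 < Tmax μ K (Eᶜ.indicator fun _ => (1 : ℝ)) x}) := by
        refine measure_mono fun x hx => ?_
        by_cases hxconv : ∃ L, Tendsto (fun ε => Ttrunc μ K ε (E.indicator fun _ => (1 : ℝ)) x)
          (𝓝[>] 0) (𝓝 L)
        · exact Or.inr (lt_Tmax_indicator_compl_of_lt_limsupOsc hKmeas hK hE.measurableSet
            hxconv ht hx)
        · exact Or.inl hxconv
    _ ≤ 0 + μ {x | t / 2 < Tmax μ K (Eᶜ.indicator fun _ => (1 : ℝ)) x} := by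
        rw [← ae_iff.1 hconv]
        exact measure_union_le _ _
    _ ≤ ENNReal.ofReal (C * (μ Eᶜ).toReal / (t / 2)) := by
        rw [zero_add]
        exact measure_lt_Tmax_indicator_le hweak hE.measurableSet.compl (half_pos ht)
    _ = ENNReal.ofReal (2 * C * (μ Eᶜ).toReal / t) := by
        congr 1
        field_simp

end OscillationEstimate

lemma ae_exists_mem_of_tendsto_measure_compl {α : Type*} [MeasurableSpace α] {μ : Measure α}
    {s : ℕ → Set α} (h : Tendsto (fun k => μ (s k)ᶜ) atTop (𝓝 0)) : ∀ᵐ x ∂μ, ∃ k, x ∈ s k := by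
  rw [ae_iff]
  refine nonpos_iff_eq_zero.1 (ge_of_tendsto' h fun k => measure_mono fun x hx => ?_)
  exact fun hxk => hx ⟨k, hxk⟩

section Convergence

variable {X : Type*} [MetricSpace X] [MeasurableSpace X] [BorelSpace X]
  {μ : Measure X} [IsFiniteMeasure μ] {K : X → X → ℝ}

lemma tendsto_measure_thickening_sdiff {E : Set X} (hE : IsClosed E) :
    Tendsto (fun δ => μ (thickening δ E \ E)) (𝓝[>] 0) (𝓝 0) := by
  have h := ENNReal.Tendsto.sub
    (tendsto_measure_thickening_of_isClosed ⟨1, one_pos, measure_ne_top μ _⟩ hE)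
    (tendsto_const_nhds (x := μ E)) (Or.inr (measure_ne_top μ E))
  rw [tsub_self] at h
  refine h.congr' ?_
  filter_upwards [self_mem_nhdsWithin] with δ hδ
  exact (measure_sdiff (self_subset_thickening hδ E) hE.measurableSet.nullMeasurableSet
    (measure_ne_top μ E)).symm

lemma lt_Tmax_indicator_sdiff_of_lt_abs_Ttrunc_indicator_compl
    (hKmeas : Measurable fun p : X × X => K p.1 p.2) (hK : BoundedOffDiagonal K) {E V : Set X}
    (hE : MeasurableSet E) (hV : MeasurableSet V) {x : X} {δ ε M b : ℝ} (hδ : 0 < δ)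
    (hxV : ball x δ ⊆ V) (hε : 0 < ε) (hM0 : 0 ≤ M) (hM : ∀ y, ε ≤ dist x y → |K x y| ≤ M)
    (hsmall : M * μ.real (V \ E) ≤ 1)
    (hbig : b + 1 < |Ttrunc μ K ε (Eᶜ.indicator fun _ => (1 : ℝ)) x|) :
    b < Tmax μ K ((Eᶜ \ V).indicator fun _ => (1 : ℝ)) x := by
  have hEc : (Eᶜ \ V) ∪ (V \ E) = Eᶜ := by
    ext y
    simp only [mem_union, Set.mem_sdiff, mem_compl_iff]
    tauto
  have hsplit := Ttrunc_indicator_union (μ := μ) hKmeas hK x hε (hE.compl.diff hV)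
    (hV.diff hE) (disjoint_sdiff_left.mono_right sdiff_subset)
  rw [hEc] at hsplit
  have hVE : |Ttrunc μ K ε ((V \ E).indicator fun _ => (1 : ℝ)) x| ≤ 1 :=
    (abs_Ttrunc_indicator_le (hV.diff hE) hM0 hM).trans hsmall
  have hbdd := bddAbove_abs_Ttrunc_of_forall_mem_ball_eq_zero (μ := μ) hK
    (abs_indicator_one_le (Eᶜ \ V)) hδ fun y hy => indicator_of_notMem (fun h => h.2 (hxV hy)) _
  refine lt_Tmax_of_lt_abs_Ttrunc hbdd hε ?_
  rw [hsplit] at hbig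
  linarith [abs_add_le (Ttrunc μ K ε ((Eᶜ \ V).indicator fun _ => (1 : ℝ)) x)
    (Ttrunc μ K ε ((V \ E).indicator fun _ => (1 : ℝ)) x)]

lemma measure_exists_lt_abs_Ttrunc_indicator_compl_le
    (hKmeas : Measurable fun p : X × X => K p.1 p.2) (hK : BoundedOffDiagonal K) {C : ℝ}
    (hweak : WeakTypeOneOne μ K C) {E : Set X} (hE : IsClosed E) {r b : ℝ} (hr : 0 < r)
    (hb : 0 < b) :
    μ {x | x ∈ E ∧ ∃ ε, r ≤ ε ∧ b + 1 < |Ttrunc μ K ε (Eᶜ.indicator fun _ => (1 : ℝ)) x|} ≤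
      ENNReal.ofReal (|C| * μ.real univ / b) := by
  obtain ⟨M, hM0, hM⟩ := hK.exists_bound hr
  obtain ⟨δ, hsmall, hδ⟩ : ∃ δ, M * μ.real (thickening δ E \ E) < 1 ∧ 0 < δ := by
    have h := ((ENNReal.tendsto_toReal ENNReal.zero_ne_top).comp
      (tendsto_measure_thickening_sdiff (μ := μ) hE)).const_mul M
    rw [ENNReal.toReal_zero, mul_zero] at h
    exact ((h.eventually_lt_const one_pos).and self_mem_nhdsWithin).exists
  have hV : MeasurableSet (thickening δ E) := isOpen_thickening.measurableSet
  calc _ ≤ μ {x | b < Tmax μ K ((Eᶜ \ thickening δ E).indicator fun _ => (1 : ℝ)) x} := by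
        refine measure_mono fun x ⟨hxE, ε, hrε, hbig⟩ => ?_
        exact lt_Tmax_indicator_sdiff_of_lt_abs_Ttrunc_indicator_compl hKmeas hK hE.measurableSet
          hV hδ (ball_subset_thickening hxE δ) (hr.trans_le hrε) hM0
          (fun y hy => hM x y (hrε.trans hy)) hsmall.le hbig
    _ ≤ ENNReal.ofReal (C * μ.real (Eᶜ \ thickening δ E) / b) :=
        measure_lt_Tmax_indicator_le hweak (hE.measurableSet.compl.diff hV) hb
    _ ≤ ENNReal.ofReal (|C| * μ.real univ / b) := by
        refine ENNReal.ofReal_le_ofReal (div_le_div_of_nonneg_right ?_ hb.le)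
        exact mul_le_mul (le_abs_self C) (measureReal_mono (subset_univ _)) measureReal_nonneg
          (abs_nonneg C)

lemma ae_bddAbove_abs_Ttrunc_indicator_compl (hKmeas : Measurable fun p : X × X => K p.1 p.2)
    (hK : BoundedOffDiagonal K) {C : ℝ} (hweak : WeakTypeOneOne μ K C) {E : Set X}
    (hE : IsClosed E) :
    ∀ᵐ x ∂μ, x ∈ E →
      BddAbove (range fun ε : {e : ℝ // 0 < e} => |Ttrunc μ K ε (Eᶜ.indicator fun _ => 1) x|) := by
  set D := {x | ¬(x ∈ E →
    BddAbove (range fun ε : {e : ℝ // 0 < e} => |Ttrunc μ K ε (Eᶜ.indicator fun _ => 1) x|))}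
  have hD : ∀ b : ℝ, 0 < b → μ D ≤ ENNReal.ofReal (|C| * μ.real univ / b) := by
    intro b hb
    set Dn : ℕ → Set X := fun n => {x | x ∈ E ∧ ∃ ε, 1 / ((n : ℝ) + 1) ≤ ε ∧
      b + 1 < |Ttrunc μ K ε (Eᶜ.indicator fun _ => (1 : ℝ)) x|}
    have hDn : Monotone Dn := fun n m hnm x ⟨hxE, ε, hε, hbig⟩ =>
      ⟨hxE, ε, (Nat.one_div_le_one_div hnm).trans hε, hbig⟩
    have hcover : D ⊆ ⋃ n, Dn n := by
      intro x hx
      obtain ⟨hxE, hunb⟩ := Classical.not_imp.1 hx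
      obtain ⟨_, ⟨⟨ε, hε⟩, rfl⟩, hbig⟩ := not_bddAbove_iff.1 hunb (b + 1)
      obtain ⟨n, hn⟩ := exists_nat_one_div_lt hε
      exact mem_iUnion.2 ⟨n, hxE, ε, hn.le, hbig⟩
    calc μ D ≤ μ (⋃ n, Dn n) := measure_mono hcover
      _ = ⨆ n, μ (Dn n) := hDn.measure_iUnion
      _ ≤ _ := iSup_le fun n => measure_exists_lt_abs_Ttrunc_indicator_compl_le hKmeas hK hweak hE
          Nat.one_div_pos_of_nat hb
  rw [ae_iff]
  have h := ENNReal.tendsto_ofReal (tendsto_const_div_atTop_nhds_zero_nat (|C| * μ.real univ))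
  rw [ENNReal.ofReal_zero] at h
  exact nonpos_iff_eq_zero.1 (ge_of_tendsto h ((eventually_gt_atTop 0).mono fun n hn =>
    hD n (Nat.cast_pos.2 hn)))

lemma exists_tendsto_Ttrunc_one_of_limsupOsc_nonpos
    (hKmeas : Measurable fun p : X × X => K p.1 p.2) (hK : BoundedOffDiagonal K) {E : Set X}
    (hE : MeasurableSet E) {x : X}
    (hconv : ∃ L, Tendsto (fun ε => Ttrunc μ K ε (E.indicator fun _ => (1 : ℝ)) x) (𝓝[>] 0) (𝓝 L))
    (hbdd : BddAbove (range fun ε : {e : ℝ // 0 < e} =>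
      |Ttrunc μ K ε (Eᶜ.indicator fun _ => 1) x|))
    (hosc : limsupOsc (fun ε => Ttrunc μ K ε (fun _ => (1 : ℝ)) x) (𝓝[>] 0) ≤ 0) :
    ∃ L, Tendsto (fun ε => Ttrunc μ K ε (fun _ => (1 : ℝ)) x) (𝓝[>] 0) (𝓝 L) := by
  obtain ⟨L, hL⟩ := hconv
  obtain ⟨A, hA⟩ := hbdd
  refine exists_tendsto_of_limsupOsc_nonpos (isBoundedUnder_abs_of_eventually_eq_add
    (eventually_mem_nhdsWithin.mono fun ε hε => Ttrunc_one_eq_add hKmeas hK x hε hE)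
    hL.abs.isBoundedUnder_le (isBoundedUnder_of_eventually_le (a := A) ?_)) hosc
  filter_upwards [self_mem_nhdsWithin] with ε hε
  exact hA ⟨⟨ε, hε⟩, rfl⟩

lemma ae_limsupOsc_nonpos (hKmeas : Measurable fun p : X × X => K p.1 p.2)
    (hK : BoundedOffDiagonal K) {C : ℝ} (hweak : WeakTypeOneOne μ K C) {E : ℕ → Set X}
    (hE : ∀ k, IsClosed (E k))
    (hconv : ∀ k, ∀ᵐ x ∂μ, x ∈ E k → ∃ L,
      Tendsto (fun ε => Ttrunc μ K ε ((E k).indicator fun _ => (1 : ℝ)) x) (𝓝[>] 0) (𝓝 L))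
    (hlim : Tendsto (fun k => μ (E k)ᶜ) atTop (𝓝 0)) :
    ∀ᵐ x ∂μ, limsupOsc (fun ε => Ttrunc μ K ε (fun _ => (1 : ℝ)) x) (𝓝[>] 0) ≤ 0 := by
  have hnull : ∀ t : ℝ, 0 < t →
      μ {x | t < limsupOsc (fun ε => Ttrunc μ K ε (fun _ => (1 : ℝ)) x) (𝓝[>] 0)} = 0 := by
    intro t ht
    have h := ENNReal.tendsto_ofReal ((((ENNReal.tendsto_toReal ENNReal.zero_ne_top).comp
      hlim).const_mul (2 * C)).div_const t)
    simp only [ENNReal.toReal_zero, mul_zero, zero_div, ENNReal.ofReal_zero] at h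
    exact nonpos_iff_eq_zero.1 (ge_of_tendsto' h fun k =>
      measure_lt_limsupOsc_le hKmeas hK hweak (hE k) (hconv k) ht)
  filter_upwards [ae_all_iff.2 fun n : ℕ =>
    measure_eq_zero_iff_ae_notMem.1 (hnull _ Nat.one_div_pos_of_nat)] with x hx
  by_contra! hpos
  obtain ⟨n, hn⟩ := exists_nat_one_div_lt hpos
  exact hx n hn

end Convergence

theorem oscillation_bound_and_ae_convergence_general
    {X : Type*} [MetricSpace X]
    [MeasurableSpace X] [BorelSpace X]
    (μ : Measure X) [IsFiniteMeasure μ]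
    (K : X → X → ℝ)
    (hKmeas : Measurable (fun p : X × X => K p.1 p.2))
    (hKbdd : ∀ δ : ℝ, 0 < δ → ∃ M : ℝ, ∀ x y : X, δ < dist x y → |K x y| ≤ M)
    (C : ℝ)
    (hweak : ∀ f : X → ℝ, Integrable f μ → ∀ t : ℝ, 0 < t →
      μ {x | t < Tmax μ K f x} ≤ ENNReal.ofReal (C * (∫ x, |f x| ∂μ) / t)) :
    (∀ E : Set X, IsClosed E →
      (∀ᵐ x ∂μ, x ∈ E → ∃ L : ℝ,
        Tendsto (fun ε : ℝ => Ttrunc μ K ε (E.indicator fun _ => (1 : ℝ)) x)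
          (𝓝[>] 0) (𝓝 L)) →
      ∀ t : ℝ, 0 < t →
        μ {x | t < Filter.limsup
            (fun p : ℝ × ℝ =>
              |Ttrunc μ K p.1 (fun _ => (1 : ℝ)) x -
                Ttrunc μ K p.2 (fun _ => (1 : ℝ)) x|)
            ((𝓝[>] (0 : ℝ)) ×ˢ (𝓝[>] (0 : ℝ)))} ≤
          ENNReal.ofReal (2 * C * (μ Eᶜ).toReal / t)) ∧
    (∀ Ek : ℕ → Set X,
      (∀ k, IsClosed (Ek k)) →
      (∀ k, ∀ᵐ x ∂μ, x ∈ Ek k → ∃ L : ℝ,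
        Tendsto (fun ε : ℝ => Ttrunc μ K ε ((Ek k).indicator fun _ => (1 : ℝ)) x)
          (𝓝[>] 0) (𝓝 L)) →
      Tendsto (fun k => μ (Ek k)ᶜ) atTop (𝓝 0) →
      ∀ᵐ x ∂μ, ∃ L : ℝ,
        Tendsto (fun ε : ℝ => Ttrunc μ K ε (fun _ => (1 : ℝ)) x)
          (𝓝[>] 0) (𝓝 L)) := by
  refine ⟨fun E hE hae t ht => measure_lt_limsupOsc_le hKmeas hKbdd hweak hE hae ht,
    fun Ek hEk hconv hlim => ?_⟩
  have hgood : ∀ᵐ x ∂μ, ∀ k, x ∈ Ek k →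
      (∃ L, Tendsto (fun ε => Ttrunc μ K ε ((Ek k).indicator fun _ => (1 : ℝ)) x)
        (𝓝[>] 0) (𝓝 L)) ∧
      BddAbove (range fun ε : {e : ℝ // 0 < e} =>
        |Ttrunc μ K ε ((Ek k)ᶜ.indicator fun _ => 1) x|) :=
    ae_all_iff.2 fun k => (hconv k).and
      (ae_bddAbove_abs_Ttrunc_indicator_compl hKmeas hKbdd hweak (hEk k)) |>.mono
      fun x hx hxk => ⟨hx.1 hxk, hx.2 hxk⟩
  filter_upwards [hgood, ae_exists_mem_of_tendsto_measure_compl hlim,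
    ae_limsupOsc_nonpos hKmeas hKbdd hweak hEk hconv hlim] with x hx ⟨k, hxk⟩ hosc
  exact exists_tendsto_Ttrunc_one_of_limsupOsc_nonpos hKmeas hKbdd (hEk k).measurableSet
    (hx k hxk).1 (hx k hxk).2 hosc

/-- assuming the weak (1,1) inequality for `T*`, if `E` is a
closed set on which `T_ε(χ_E)` converges `μ`-a.e., then the oscillation of
`T_ε(1)` exceeds `t` on a set of measure at most `2C μ(X∖E)/t`; consequently,
if closed sets `E_k` with `μ(X∖E_k) → 0` and this a.e. convergence exist,
then `lim_{ε→0} T_ε(1)(x)` exists for `μ`-a.e. `x`. -/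
theorem oscillation_bound_and_ae_convergence
    {X : Type*} [MetricSpace X] [TopologicalSpace.SeparableSpace X]
    [MeasurableSpace X] [BorelSpace X]
    (μ : Measure X) [IsFiniteMeasure μ]
    (K : X → X → ℝ)
    (hKmeas : Measurable (fun p : X × X => K p.1 p.2))
    (hKanti : ∀ x y : X, x ≠ y → K x y = -K y x)
    (hKbdd : ∀ δ : ℝ, 0 < δ → ∃ M : ℝ, ∀ x y : X, δ < dist x y → |K x y| ≤ M)
    (C : ℝ)
    (hweak : ∀ f : X → ℝ, Integrable f μ → ∀ t : ℝ, 0 < t →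
      μ {x | t < Tmax μ K f x} ≤ ENNReal.ofReal (C * (∫ x, |f x| ∂μ) / t)) :
    (∀ E : Set X, IsClosed E →
      (∀ᵐ x ∂μ, x ∈ E → ∃ L : ℝ,
        Tendsto (fun ε : ℝ => Ttrunc μ K ε (E.indicator fun _ => (1 : ℝ)) x)
          (𝓝[>] 0) (𝓝 L)) →
      ∀ t : ℝ, 0 < t →
        μ {x | t < Filter.limsup
            (fun p : ℝ × ℝ =>
              |Ttrunc μ K p.1 (fun _ => (1 : ℝ)) x -
                Ttrunc μ K p.2 (fun _ => (1 : ℝ)) x|)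
            ((𝓝[>] (0 : ℝ)) ×ˢ (𝓝[>] (0 : ℝ)))} ≤
          ENNReal.ofReal (2 * C * (μ Eᶜ).toReal / t)) ∧
    (∀ Ek : ℕ → Set X,
      (∀ k, IsClosed (Ek k)) →
      (∀ k, ∀ᵐ x ∂μ, x ∈ Ek k → ∃ L : ℝ,
        Tendsto (fun ε : ℝ => Ttrunc μ K ε ((Ek k).indicator fun _ => (1 : ℝ)) x)
          (𝓝[>] 0) (𝓝 L)) →
      Tendsto (fun k => μ (Ek k)ᶜ) atTop (𝓝 0) →
      ∀ᵐ x ∂μ, ∃ L : ℝ,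
        Tendsto (fun ε : ℝ => Ttrunc μ K ε (fun _ => (1 : ℝ)) x)
          (𝓝[>] 0) (𝓝 L)) :=
  oscillation_bound_and_ae_convergence_general μ K hKmeas hKbdd C hweak
end
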